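/- arXiv:math/0601148 — 6 statements merged into one kernel-verified Lean document; each statement's English description precedes it below -/
import Mathlib

section
/- Let α, β, γ ∈ (0, π/2]. The symmetric 3×3 real matrix [[1, −cos α, −cos β], [−cos α, 1, −cos γ], [−cos β, −cos γ, 1]] is positive semidefinite if and only if α + β + γ ≥ π, and it is positive definite if and only if α + β + γ > π. -/
/-!
Write `G(a, b, c)` for the matrix with unit diagonal and off-diagonal entries `-a, -b, -c`.
When `a² < 1`, completing the square twice writes `(1 - a²) xᵀ G x` as a sum of two squares
plus `det G · x₂²`, so `G` is positive semidefinite iff `det G ≥ 0`; positive definiteness adds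
invertibility, i.e. `det G > 0`. For `G(cos α, cos β, cos γ)` the determinant factors as
`(cos (π - γ) - cos (α + β)) (cos γ + cos (α - β))`. For angles in `(0, π/2]` the second factor is
positive, and since `cos` is decreasing on `[0, π]` the sign of the first is that of
`α + β + γ - π`.
-/

open Real Matrix

def unitGram (a b c : ℝ) : Matrix (Fin 3) (Fin 3) ℝ :=
  !![1, -a, -b; -a, 1, -c; -b, -c, 1]

namespace unitGram

variable (a b c : ℝ)

lemma isHermitian : (unitGram a b c).IsHermitian := by
  ext i j
  fin_cases i <;> fin_cases j <;> rfl

lemma det_eq : (unitGram a b c).det = 1 - a ^ 2 - b ^ 2 - c ^ 2 - 2 * a * b * c := by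
  simp only [unitGram, det_fin_three, of_apply, cons_val', cons_val_zero, cons_val_one, cons_val,
    cons_val_fin_one]
  ring

lemma one_sub_sq_mul_dotProduct_mulVec (x : Fin 3 → ℝ) :
    (1 - a ^ 2) * (star x ⬝ᵥ (unitGram a b c *ᵥ x)) =
      (1 - a ^ 2) * (x 0 - a * x 1 - b * x 2) ^ 2 + ((1 - a ^ 2) * x 1 - (c + a * b) * x 2) ^ 2
        + (unitGram a b c).det * x 2 ^ 2 := by
  rw [det_eq]
  simp only [dotProduct, mulVec, unitGram, Pi.star_apply, star_trivial, of_apply, cons_val',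
    cons_val_fin_one, Fin.sum_univ_three, cons_val_zero, cons_val_one, cons_val]
  ring

lemma det_cos (α β γ : ℝ) :
    (unitGram (cos α) (cos β) (cos γ)).det =
      (cos (π - γ) - cos (α + β)) * (cos γ + cos (α - β)) := by
  rw [det_eq, cos_pi_sub, cos_add, cos_sub]
  linear_combination (cos β ^ 2 - 1) * sin_sq_add_cos_sq α - sin α ^ 2 * sin_sq_add_cos_sq β

variable {a b c}

theorem posSemidef_iff (ha : a ^ 2 < 1) :
    (unitGram a b c).PosSemidef ↔ 0 ≤ (unitGram a b c).det := by
  refine ⟨PosSemidef.det_nonneg, fun hdet => ?_⟩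
  refine posSemidef_iff_dotProduct_mulVec.mpr ⟨isHermitian a b c, fun x => ?_⟩
  have ha' : 0 < 1 - a ^ 2 := sub_pos.mpr ha
  refine nonneg_of_mul_nonneg_right ?_ ha'
  rw [one_sub_sq_mul_dotProduct_mulVec]
  positivity

theorem posDef_iff (ha : a ^ 2 < 1) : (unitGram a b c).PosDef ↔ 0 < (unitGram a b c).det :=
  ⟨PosDef.det_pos, fun hdet =>
    ((posSemidef_iff ha).mpr hdet.le).posDef_iff_det_ne_zero.mpr hdet.ne'⟩

end unitGram

section

variable {α β γ : ℝ}

lemma cos_add_le_cos_pi_sub_iff (hαβ : α + β ∈ Set.Icc 0 π) (hγ : γ ∈ Set.Icc 0 π) :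
    cos (α + β) ≤ cos (π - γ) ↔ π ≤ α + β + γ := by
  rw [strictAntiOn_cos.le_iff_ge hαβ ⟨by linarith [hγ.2], by linarith [hγ.1]⟩]
  constructor <;> intro h <;> linarith

lemma cos_add_lt_cos_pi_sub_iff (hαβ : α + β ∈ Set.Icc 0 π) (hγ : γ ∈ Set.Icc 0 π) :
    cos (α + β) < cos (π - γ) ↔ π < α + β + γ := by
  rw [strictAntiOn_cos.lt_iff_gt hαβ ⟨by linarith [hγ.2], by linarith [hγ.1]⟩]
  constructor <;> intro h <;> linarith

end

theorem gram_matrix_posSemidef_iff_angle_sum (α β γ : ℝ)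
    (hα : α ∈ Set.Ioc 0 (π / 2)) (hβ : β ∈ Set.Ioc 0 (π / 2))
    (hγ : γ ∈ Set.Ioc 0 (π / 2)) :
    ((!![1, -Real.cos α, -Real.cos β;
         -Real.cos α, 1, -Real.cos γ;
         -Real.cos β, -Real.cos γ, 1] : Matrix (Fin 3) (Fin 3) ℝ).PosSemidef
      ↔ π ≤ α + β + γ) ∧
    ((!![1, -Real.cos α, -Real.cos β;
         -Real.cos α, 1, -Real.cos γ;
         -Real.cos β, -Real.cos γ, 1] : Matrix (Fin 3) (Fin 3) ℝ).PosDef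
      ↔ π < α + β + γ) := by
  have hcos : cos α ^ 2 < 1 := by
    rw [cos_sq']
    have hsin : 0 < sin α := sin_pos_of_pos_of_lt_pi hα.1 (by linarith [hα.2, pi_pos])
    exact sub_lt_self 1 (pow_pos hsin 2)
  have hpos : 0 < cos γ + cos (α - β) :=
    add_pos_of_nonneg_of_pos (cos_nonneg_of_mem_Icc ⟨by linarith [hγ.1, pi_pos], hγ.2⟩)
      (cos_pos_of_mem_Ioo ⟨by linarith [hα.1, hβ.2], by linarith [hα.2, hβ.1]⟩)
  have hαβ : α + β ∈ Set.Icc 0 π := ⟨by linarith [hα.1, hβ.1], by linarith [hα.2, hβ.2]⟩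
  have hγ' : γ ∈ Set.Icc 0 π := ⟨hγ.1.le, by linarith [hγ.2, pi_pos]⟩
  refine ⟨(unitGram.posSemidef_iff hcos).trans ?_, (unitGram.posDef_iff hcos).trans ?_⟩
  · rw [unitGram.det_cos, mul_nonneg_iff_of_pos_right hpos, sub_nonneg,
      cos_add_le_cos_pi_sub_iff hαβ hγ']
  · rw [unitGram.det_cos, mul_pos_iff_of_pos_right hpos, sub_pos,
      cos_add_lt_cos_pi_sub_iff hαβ hγ']
end

section
/- Let αᵢ, αⱼ, αₖ ∈ (0, π/2]. Then the quantity F = (cos αᵢ + cos αⱼ·cos αₖ)/(sin αⱼ·sin αₖ) satisfies F ≥ 0; moreover F < 1 if and only if αᵢ + αⱼ + αₖ > π. In particular, when the three dihedral angles at a trivalent vertex are non-obtuse and sum to more than π, each face angle β = arccos(F) at that vertex is well defined and satisfies 0 < β ≤ π/2. -/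
open Real

/-- By the spherical law of cosines, the cosine of the face angle `βi` at a vertex with
dihedral angles `αi, αj, αk`. -/
noncomputable def faceAngleCos (αi αj αk : ℝ) : ℝ :=
  (cos αi + cos αj * cos αk) / (sin αj * sin αk)

lemma cos_lt_neg_cos_iff {x y : ℝ} (hx : x ∈ Set.Icc 0 π) (hy : y ∈ Set.Icc 0 π) :
    cos x < -cos y ↔ π < x + y := by
  have hy' : π - y ∈ Set.Icc 0 π := ⟨by linarith [hy.2], by linarith [hy.1]⟩
  rw [← cos_pi_sub, strictAntiOn_cos.lt_iff_gt hx hy']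
  constructor <;> intro h <;> linarith

lemma faceAngleCos_nonneg {αi αj αk : ℝ} (hi : αi ∈ Set.Icc (-(π / 2)) (π / 2))
    (hj : αj ∈ Set.Icc 0 (π / 2)) (hk : αk ∈ Set.Icc 0 (π / 2)) :
    0 ≤ faceAngleCos αi αj αk := by
  have hcos {α : ℝ} (h : α ∈ Set.Icc 0 (π / 2)) : 0 ≤ cos α :=
    cos_nonneg_of_mem_Icc ⟨by linarith [h.1, pi_pos], h.2⟩
  have hsin {α : ℝ} (h : α ∈ Set.Icc 0 (π / 2)) : 0 ≤ sin α :=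
    sin_nonneg_of_nonneg_of_le_pi h.1 (by linarith [h.2, pi_pos])
  exact div_nonneg (add_nonneg (cos_nonneg_of_mem_Icc hi) (mul_nonneg (hcos hj) (hcos hk)))
    (mul_nonneg (hsin hj) (hsin hk))

lemma faceAngleCos_lt_one_iff {αi αj αk : ℝ} (hi : αi ∈ Set.Icc 0 π) (hj : 0 < αj)
    (hk : 0 < αk) (hjk : αj + αk ≤ π) :
    faceAngleCos αi αj αk < 1 ↔ π < αi + αj + αk := by
  have hsin : 0 < sin αj * sin αk :=
    mul_pos (sin_pos_of_pos_of_lt_pi hj (by linarith)) (sin_pos_of_pos_of_lt_pi hk (by linarith))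
  rw [faceAngleCos, div_lt_one hsin, add_assoc,
    ← cos_lt_neg_cos_iff hi ⟨by linarith, hjk⟩, cos_add]
  constructor <;> intro h <;> linarith

theorem face_angle_well_defined (αi αj αk : ℝ)
    (hi : αi ∈ Set.Ioc 0 (π / 2)) (hj : αj ∈ Set.Ioc 0 (π / 2))
    (hk : αk ∈ Set.Ioc 0 (π / 2)) :
    0 ≤ (Real.cos αi + Real.cos αj * Real.cos αk) / (Real.sin αj * Real.sin αk) ∧
    ((Real.cos αi + Real.cos αj * Real.cos αk) / (Real.sin αj * Real.sin αk) < 1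
      ↔ π < αi + αj + αk) ∧
    (π < αi + αj + αk →
      0 < Real.arccos
          ((Real.cos αi + Real.cos αj * Real.cos αk) / (Real.sin αj * Real.sin αk)) ∧
      Real.arccos
          ((Real.cos αi + Real.cos αj * Real.cos αk) / (Real.sin αj * Real.sin αk))
        ≤ π / 2) := by
  have hpi := pi_pos
  have hF0 : 0 ≤ faceAngleCos αi αj αk :=
    faceAngleCos_nonneg ⟨by linarith [hi.1], hi.2⟩ (Set.Ioc_subset_Icc_self hj)
      (Set.Ioc_subset_Icc_self hk)
  have hF1 : faceAngleCos αi αj αk < 1 ↔ π < αi + αj + αk :=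
    faceAngleCos_lt_one_iff ⟨hi.1.le, by linarith [hi.2]⟩ hj.1 hk.1 (by linarith [hj.2, hk.2])
  exact ⟨hF0, hF1, fun h => ⟨arccos_pos.2 (hF1.2 h), arccos_le_pi_div_two.2 hF0⟩⟩
end

section
/- Define F(x,y,z) = (cos x + cos y·cos z)/(sin y·sin z). Then F is antitone in each variable on (0, π/2]³: if (x,y,z), (x',y',z') ∈ (0, π/2]³ with x ≤ x', y ≤ y', z ≤ z', then F(x,y,z) ≥ F(x',y',z'). Consequently, for the face angle β = arccos(F) (whenever F takes values in [−1,1]), decreasing any of the dihedral angles does not increase β. -/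
open Real

/-- The spherical-law-of-cosines expression for the cosine of a face angle
at a trivalent vertex with dihedral angles `x, y, z`. -/
noncomputable def F (x y z : ℝ) : ℝ :=
  (Real.cos x + Real.cos y * Real.cos z) / (Real.sin y * Real.sin z)

lemma sin_pos_aux {a : ℝ} (ha : a ∈ Set.Ioc 0 (π / 2)) : 0 < Real.sin a :=
  Real.sin_pos_of_pos_of_lt_pi ha.1 (lt_of_le_of_lt ha.2 (by linarith [Real.pi_pos]))

lemma cos_nonneg_aux {a : ℝ} (ha : a ∈ Set.Ioc 0 (π / 2)) : 0 ≤ Real.cos a :=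
  Real.cos_nonneg_of_mem_Icc ⟨by linarith [ha.1, Real.pi_pos], ha.2⟩

lemma sin_mono_aux {a b : ℝ} (ha : a ∈ Set.Ioc 0 (π / 2)) (hb : b ∈ Set.Ioc 0 (π / 2))
    (hab : a ≤ b) : Real.sin a ≤ Real.sin b := by
  apply Real.strictMonoOn_sin.monotoneOn
  · exact ⟨by linarith [ha.1, Real.pi_pos], ha.2⟩
  · exact ⟨by linarith [hb.1, Real.pi_pos], hb.2⟩
  · exact hab

lemma cot_anti_aux {a b : ℝ} (ha : a ∈ Set.Ioc 0 (π / 2)) (hb : b ∈ Set.Ioc 0 (π / 2))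
    (hab : a ≤ b) : Real.cos b / Real.sin b ≤ Real.cos a / Real.sin a := by
  apply div_le_div₀ (cos_nonneg_aux ha)
  · exact Real.cos_le_cos_of_nonneg_of_le_pi (le_of_lt ha.1)
      (by linarith [hb.2, Real.pi_pos]) hab
  · exact sin_pos_aux ha
  · exact sin_mono_aux ha hb hab

theorem F_antitone (x y z x' y' z' : ℝ)
    (hx : x ∈ Set.Ioc 0 (π / 2)) (hy : y ∈ Set.Ioc 0 (π / 2))
    (hz : z ∈ Set.Ioc 0 (π / 2))
    (hx' : x' ∈ Set.Ioc 0 (π / 2)) (hy' : y' ∈ Set.Ioc 0 (π / 2))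
    (hz' : z' ∈ Set.Ioc 0 (π / 2))
    (hxx : x ≤ x') (hyy : y ≤ y') (hzz : z ≤ z') :
    F x' y' z' ≤ F x y z ∧
    (F x y z ∈ Set.Icc (-1 : ℝ) 1 → F x' y' z' ∈ Set.Icc (-1 : ℝ) 1 →
      Real.arccos (F x y z) ≤ Real.arccos (F x' y' z')) := by
  have hsy := sin_pos_aux hy
  have hsz := sin_pos_aux hz
  have hsy' := sin_pos_aux hy'
  have hsz' := sin_pos_aux hz'
  have key : F x' y' z' ≤ F x y z := by
    have h1 : Real.cos x' / (Real.sin y' * Real.sin z') ≤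
        Real.cos x / (Real.sin y * Real.sin z) := by
      apply div_le_div₀ (cos_nonneg_aux hx)
      · exact Real.cos_le_cos_of_nonneg_of_le_pi (le_of_lt hx.1)
          (by linarith [hx'.2, Real.pi_pos]) hxx
      · exact mul_pos hsy hsz
      · exact mul_le_mul (sin_mono_aux hy hy' hyy) (sin_mono_aux hz hz' hzz)
          hsz.le hsy'.le
    have h2 : (Real.cos y' / Real.sin y') * (Real.cos z' / Real.sin z') ≤
        (Real.cos y / Real.sin y) * (Real.cos z / Real.sin z) := by
      apply mul_le_mul (cot_anti_aux hy hy' hyy) (cot_anti_aux hz hz' hzz)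
        (div_nonneg (cos_nonneg_aux hz') hsz'.le)
        (div_nonneg (cos_nonneg_aux hy) hsy.le)
    have e : ∀ a b c : ℝ, 0 < Real.sin b → 0 < Real.sin c →
        F a b c = Real.cos a / (Real.sin b * Real.sin c)
          + (Real.cos b / Real.sin b) * (Real.cos c / Real.sin c) := by
      intro a b c hb hc
      rw [F]
      field_simp
    rw [e x y z hsy hsz, e x' y' z' hsy' hsz']
    linarith
  refine ⟨key, fun h1 h2 => ?_⟩
  exact Real.strictAntiOn_arccos.antitoneOn h2 h1 key
end

section
/- Let v, v' : Fin 4 → ℝ⁴ each consist of unit spacelike vectors (⟨v i, v i⟩ = 1 = ⟨v' i, v' i⟩) such that both P(v) = {w ∈ ℍ³ : ⟨w, v i⟩ ≥ 0 for all i} and P(v') are compact with nonempty interior, and suppose ⟨v i, v j⟩ = ⟨v' i, v' j⟩ for all i, j (i.e., the two compact hyperbolic tetrahedra have the same dihedral angle along each corresponding edge). Then there is a linear automorphism ρ of ℝ⁴ preserving the Lorentzian bilinear form with ρ(ℍ³) = ℍ³ and ρ(v i) = v' i for all i; consequently ρ(P(v)) = P(v'), so the marked tetrahedron with given non-obtuse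 dihedral angles is unique up to hyperbolic isometry. -/
open Real

/-- The Lorentzian bilinear form on `ℝ⁴`. -/
noncomputable def lor (x y : Fin 4 → ℝ) : ℝ :=
  -(x 0 * y 0) + x 1 * y 1 + x 2 * y 2 + x 3 * y 3

/-- The hyperboloid model of hyperbolic 3-space. -/
def Hyp : Set (Fin 4 → ℝ) := {x | lor x x = -1 ∧ 0 < x 0}

/-- The intersection of the four half-spaces with normals `v i`, as a subset of `ℍ³`. -/
def polyhedron (v : Fin 4 → (Fin 4 → ℝ)) : Set (Fin 4 → ℝ) :=
  {w ∈ Hyp | ∀ i, 0 ≤ lor w (v i)}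

/-!
A compact tetrahedron has a point `a` strictly inside all four walls. If the normals `v i` were
linearly dependent, some `u ≠ 0` would be orthogonal to all of them; the component of `±u`
orthogonal to `a` is spacelike and points into every half-space, so the geodesic ray from `a` in
that direction stays in the polyhedron, contradicting compactness. Hence the normals form a basis,
and the linear map `v i ↦ v' i` preserves the form because the Gram matrices agree. It maps `a` to
a point of the cone over `P(v')`, and this point lies on the upper sheet: on the lower sheet it
would itself be an escape direction from an interior point of `P(v')`. An isometry sending one
point of the upper sheet to the upper sheet preserves the whole sheet, by the reversed
Cauchy–Schwarz inequality `⟨x, y⟩ ≤ -1` on `ℍ³`.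
-/

theorem Module.Basis.equiv_preserves_bilin {ι R M N : Type*} [CommSemiring R]
    [AddCommMonoid M] [Module R M] [AddCommMonoid N] [Module R N] (B : M →ₗ[R] M →ₗ[R] N)
    (b b' : Module.Basis ι R M) (h : ∀ i j, B (b' i) (b' j) = B (b i) (b j)) (x y : M) :
    B (b.equiv b' (Equiv.refl ι) x) (b.equiv b' (Equiv.refl ι) y) = B x y := by
  let ρ := (b.equiv b' (Equiv.refl ι)).toLinearMap
  have : B.compl₁₂ ρ ρ = B := LinearMap.ext_basis b b fun i j => by simp [ρ, h]
  exact LinearMap.congr_fun₂ this x y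

noncomputable def lorForm : LinearMap.BilinForm ℝ (Fin 4 → ℝ) :=
  LinearMap.mk₂ ℝ lor (fun _ _ _ => by simp only [lor, Pi.add_apply]; ring)
    (fun _ _ _ => by simp only [lor, Pi.smul_apply, smul_eq_mul]; ring)
    (fun _ _ _ => by simp only [lor, Pi.add_apply]; ring)
    (fun _ _ _ => by simp only [lor, Pi.smul_apply, smul_eq_mul]; ring)

@[simp] lemma lorForm_apply (x y : Fin 4 → ℝ) : lorForm x y = lor x y := rfl

lemma lor_comm (x y : Fin 4 → ℝ) : lor x y = lor y x := by
  simp only [lor]; ring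

lemma lor_neg_left (x y : Fin 4 → ℝ) : lor (-x) y = -lor x y := by
  simp only [lor, Pi.neg_apply]; ring

lemma lor_neg_neg (x : Fin 4 → ℝ) : lor (-x) (-x) = lor x x := by
  simp only [lor, Pi.neg_apply]; ring

lemma lor_smul_left (c : ℝ) (x y : Fin 4 → ℝ) : lor (c • x) y = c * lor x y := by
  simp only [lor, Pi.smul_apply, smul_eq_mul]; ring

lemma lor_smul_right (c : ℝ) (x y : Fin 4 → ℝ) : lor x (c • y) = c * lor x y := by
  simp only [lor, Pi.smul_apply, smul_eq_mul]; ring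

lemma lor_add_smul_left (x y w : Fin 4 → ℝ) (c : ℝ) :
    lor (x + c • y) w = lor x w + c * lor y w := by
  simp only [lor, Pi.add_apply, Pi.smul_apply, smul_eq_mul]; ring

lemma one_le_sq_of_lor_self_eq_neg_one {x : Fin 4 → ℝ} (hx : lor x x = -1) : 1 ≤ x 0 ^ 2 := by
  simp only [lor] at hx
  nlinarith [sq_nonneg (x 1), sq_nonneg (x 2), sq_nonneg (x 3)]

lemma neg_mem_Hyp {x : Fin 4 → ℝ} (hx : lor x x = -1) (hx0 : ¬ 0 < x 0) : -x ∈ Hyp := by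
  refine ⟨by rw [lor_neg_neg, hx], ?_⟩
  have := one_le_sq_of_lor_self_eq_neg_one hx
  rw [Pi.neg_apply, neg_pos]
  nlinarith

lemma lor_le_neg_one {x y : Fin 4 → ℝ} (hx : x ∈ Hyp) (hy : y ∈ Hyp) : lor x y ≤ -1 := by
  obtain ⟨hxx, hx0⟩ := hx
  obtain ⟨hyy, hy0⟩ := hy
  simp only [lor] at hxx hyy ⊢
  have cauchySchwarz : (x 1 * y 1 + x 2 * y 2 + x 3 * y 3) ^ 2 ≤
      (x 1 ^ 2 + x 2 ^ 2 + x 3 ^ 2) * (y 1 ^ 2 + y 2 ^ 2 + y 3 ^ 2) := by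
    nlinarith [sq_nonneg (x 1 * y 2 - x 2 * y 1), sq_nonneg (x 1 * y 3 - x 3 * y 1),
      sq_nonneg (x 2 * y 3 - x 3 * y 2)]
  have hx1 : 1 ≤ x 0 := by nlinarith [sq_nonneg (x 1), sq_nonneg (x 2), sq_nonneg (x 3)]
  have hy1 : 1 ≤ y 0 := by nlinarith [sq_nonneg (y 1), sq_nonneg (y 2), sq_nonneg (y 3)]
  have key : (x 1 * y 1 + x 2 * y 2 + x 3 * y 3) ^ 2 ≤ (x 0 * y 0 - 1) ^ 2 := by
    nlinarith [sq_nonneg (x 0 - y 0)]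
  linarith [le_of_sq_le_sq key (by nlinarith)]

lemma mem_Hyp_of_lor_neg {x y : Fin 4 → ℝ} (hx : lor x x = -1) (hy : y ∈ Hyp)
    (hxy : lor x y < 0) : x ∈ Hyp := by
  refine ⟨hx, ?_⟩
  by_contra hx0
  have := lor_le_neg_one (neg_mem_Hyp hx hx0) hy
  rw [lor_neg_left] at this
  linarith

lemma lor_self_pos_of_lor_eq_zero {u e : Fin 4 → ℝ} (hu : lor u u < 0) (hue : lor u e = 0)
    (he : e ≠ 0) : 0 < lor e e := by
  refine lt_of_not_ge fun hee => he ?_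
  simp only [lor] at hu hue hee
  have cauchySchwarz : (u 1 * e 1 + u 2 * e 2 + u 3 * e 3) ^ 2 ≤
      (u 1 ^ 2 + u 2 ^ 2 + u 3 ^ 2) * (e 1 ^ 2 + e 2 ^ 2 + e 3 ^ 2) := by
    nlinarith [sq_nonneg (u 1 * e 2 - u 2 * e 1), sq_nonneg (u 1 * e 3 - u 3 * e 1),
      sq_nonneg (u 2 * e 3 - u 3 * e 2)]
  have he0 : e 0 = 0 := by
    have h1 : (u 0 * e 0) ^ 2 ≤
        (u 1 ^ 2 + u 2 ^ 2 + u 3 ^ 2) * (e 1 ^ 2 + e 2 ^ 2 + e 3 ^ 2) := by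
      rwa [show u 0 * e 0 = u 1 * e 1 + u 2 * e 2 + u 3 * e 3 by linarith]
    have h2 : (u 1 ^ 2 + u 2 ^ 2 + u 3 ^ 2) * (e 1 ^ 2 + e 2 ^ 2 + e 3 ^ 2) ≤
        (u 1 ^ 2 + u 2 ^ 2 + u 3 ^ 2) * e 0 ^ 2 :=
      mul_le_mul_of_nonneg_left (by nlinarith) (by positivity)
    have : e 0 ^ 2 * (u 0 ^ 2 - (u 1 ^ 2 + u 2 ^ 2 + u 3 ^ 2)) ≤ 0 := by nlinarith
    exact pow_eq_zero_iff two_ne_zero |>.1 <|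
      le_antisymm (nonpos_of_mul_nonpos_left this (by linarith)) (sq_nonneg _)
  rw [he0] at hee
  funext i
  fin_cases i <;> simp <;> nlinarith [sq_nonneg (e 1), sq_nonneg (e 2), sq_nonneg (e 3)]

noncomputable def geodesic (a e : Fin 4 → ℝ) (t : ℝ) : Fin 4 → ℝ := cosh t • a + sinh t • e

lemma continuous_geodesic (a e : Fin 4 → ℝ) : Continuous (geodesic a e) := by
  unfold geodesic; fun_prop

lemma geodesic_zero (a e : Fin 4 → ℝ) : geodesic a e 0 = a := by
  simp [geodesic]

lemma lor_geodesic_left (a e w : Fin 4 → ℝ) (t : ℝ) :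
    lor (geodesic a e t) w = cosh t * lor a w + sinh t * lor e w := by
  simp only [geodesic, lor, Pi.add_apply, Pi.smul_apply, smul_eq_mul]; ring

lemma geodesic_mem_Hyp {a e : Fin 4 → ℝ} (ha : a ∈ Hyp) (hae : lor a e = 0) (he : lor e e = 1)
    (t : ℝ) : geodesic a e t ∈ Hyp := by
  have hea : lor e a = 0 := by rw [lor_comm, hae]
  have hself : lor (geodesic a e t) (geodesic a e t) = -1 := by
    rw [lor_geodesic_left, lor_comm a, lor_comm e, lor_geodesic_left, lor_geodesic_left, ha.1,
      hae, hea, he]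
    linear_combination (-1 : ℝ) * cosh_sq_sub_sinh_sq t
  refine mem_Hyp_of_lor_neg hself ha ?_
  rw [lor_geodesic_left, ha.1, hea]
  linarith [one_le_cosh t]

lemma not_isCompact_polyhedron_of_geodesic {v : Fin 4 → (Fin 4 → ℝ)} {a e : Fin 4 → ℝ}
    (ha : a ∈ polyhedron v) (hae : lor a e = 0) (he : lor e e = 1)
    (hev : ∀ i, 0 ≤ lor e (v i)) : ¬ IsCompact (polyhedron v) := by
  intro hc
  -- `lor · a` is bounded below on the compact polyhedron, but equals `-cosh t` along the ray
  obtain ⟨M, hM⟩ := hc.bddBelow_image (f := fun x => lor x a) (by unfold lor; fun_prop)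
  set t := 2 * |M|
  have ht : 0 ≤ t := by positivity
  have hmem : geodesic a e t ∈ polyhedron v := by
    refine ⟨geodesic_mem_Hyp ha.1 hae he t, fun i => ?_⟩
    rw [lor_geodesic_left]
    exact add_nonneg (mul_nonneg (one_pos.trans_le (one_le_cosh t)).le (ha.2 i))
      (mul_nonneg (sinh_nonneg_iff.2 ht) (hev i))
  have hcosh : M ≤ -cosh t := by
    simpa [lor_geodesic_left, ha.1.1, lor_comm e a, hae] using hM (Set.mem_image_of_mem _ hmem)
  have : t + 1 ≤ 2 * cosh t := by
    rw [cosh_eq]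
    linarith [add_one_le_exp t, exp_pos (-t)]
  linarith [neg_abs_le M]

lemma not_isCompact_polyhedron_of_direction {v : Fin 4 → (Fin 4 → ℝ)} {a u : Fin 4 → ℝ}
    (ha : a ∈ Hyp) (hav : ∀ i, 0 < lor a (v i)) (hu : u ≠ 0) (huv : ∀ i, 0 ≤ lor u (v i))
    (hau : 0 ≤ lor a u) : ¬ IsCompact (polyhedron v) := by
  set e := u + lor a u • a
  have hae : lor a e = 0 := by
    rw [lor_comm, lor_add_smul_left, ha.1, lor_comm]; ring
  have hev_eq : ∀ i, lor e (v i) = lor u (v i) + lor a u * lor a (v i) := fun i =>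
    lor_add_smul_left _ _ _ _
  have hev : ∀ i, 0 ≤ lor e (v i) := fun i => by
    rw [hev_eq]; exact add_nonneg (huv i) (mul_nonneg hau (hav i).le)
  have he : e ≠ 0 := by
    intro he
    have h0 : lor u (v 0) + lor a u * lor a (v 0) = 0 := by
      rw [← hev_eq, he]; simp [lor]
    have hau0 : lor a u = 0 := by nlinarith [huv 0, hav 0]
    exact hu (by simpa [e, hau0] using he)
  have hee := lor_self_pos_of_lor_eq_zero (by rw [ha.1]; norm_num) hae he
  refine not_isCompact_polyhedron_of_geodesic (e := (√(lor e e))⁻¹ • e)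
    ⟨ha, fun i => (hav i).le⟩ ?_ ?_ fun i => ?_
  · rw [lor_smul_right, hae, mul_zero]
  · rw [lor_smul_left, lor_smul_right, ← mul_assoc, ← sq, inv_pow, sq_sqrt hee.le,
      inv_mul_cancel₀ hee.ne']
  · rw [lor_smul_left]; exact mul_nonneg (by positivity) (hev i)

lemma exists_lor_pos_of_interior_nonempty {v : Fin 4 → (Fin 4 → ℝ)}
    (hunit : ∀ i, lor (v i) (v i) = 1)
    (hint : (interior ((Subtype.val : Hyp → (Fin 4 → ℝ)) ⁻¹' polyhedron v)).Nonempty) :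
    ∃ a ∈ Hyp, ∀ i, 0 < lor a (v i) := by
  obtain ⟨a, ha⟩ := hint
  have haP : a ∈ Subtype.val ⁻¹' polyhedron v := interior_subset ha
  refine ⟨a, a.2, fun i => (haP.2 i).lt_of_ne' fun h0 => ?_⟩
  -- on the wall of `v i`, the geodesic through `a` normal to the wall leaves the polyhedron at once
  have hγ : ∀ t, geodesic a (-v i) t ∈ Hyp := geodesic_mem_Hyp a.2
    (by rw [lor_comm, lor_neg_left, lor_comm, h0, neg_zero]) (by rw [lor_neg_neg, hunit])
  let γ : ℝ → Hyp := fun t => ⟨geodesic a (-v i) t, hγ t⟩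
  have hnhds : ∀ᶠ t in nhds 0, γ t ∈ interior (Subtype.val ⁻¹' polyhedron v) :=
    ((continuous_geodesic _ _).subtype_mk hγ).continuousAt.preimage_mem_nhds
      (by simpa [γ, geodesic_zero] using isOpen_interior.mem_nhds ha)
  obtain ⟨t, htγ, ht⟩ :=
    ((hnhds.filter_mono nhdsWithin_le_nhds).and (self_mem_nhdsWithin (s := Set.Ioi 0))).exists
  have := (interior_subset htγ : γ t ∈ Subtype.val ⁻¹' polyhedron v).2 i
  rw [lor_geodesic_left, h0, lor_neg_left, hunit] at this
  linarith [sinh_pos_iff.2 (show 0 < t from ht)]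

lemma linearIndependent_of_forall_lor_eq_zero {v : Fin 4 → (Fin 4 → ℝ)}
    (h : ∀ u, (∀ i, lor u (v i) = 0) → u = 0) : LinearIndependent ℝ v := by
  let L : (Fin 4 → ℝ) →ₗ[ℝ] (Fin 4 → ℝ) := LinearMap.pi fun i => lorForm.flip (v i)
  have hL : Function.Surjective L := LinearMap.injective_iff_surjective.1 <|
    (injective_iff_map_eq_zero L).2 fun u hu => h u fun i => congrFun hu i
  rw [Fintype.linearIndependent_iff]
  intro g hg j
  obtain ⟨w, hw⟩ := hL (Pi.single j 1)
  have := congrArg (lorForm w) hg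
  rw [map_zero] at this
  have hwv : ∀ i, lor w (v i) = (Pi.single j 1 : Fin 4 → ℝ) i := fun i => congrFun hw i
  simpa [hwv, Pi.single_apply] using this

lemma linearIndependent_of_isCompact_polyhedron {v : Fin 4 → (Fin 4 → ℝ)} {a : Fin 4 → ℝ}
    (hc : IsCompact (polyhedron v)) (ha : a ∈ Hyp) (hav : ∀ i, 0 < lor a (v i)) :
    LinearIndependent ℝ v := by
  refine linearIndependent_of_forall_lor_eq_zero fun u hu => ?_
  by_contra hu0
  rcases le_total 0 (lor a u) with hau | hau
  · exact not_isCompact_polyhedron_of_direction ha hav hu0 (fun i => (hu i).ge) hau hc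
  · refine not_isCompact_polyhedron_of_direction ha hav (neg_ne_zero.2 hu0) (fun i => ?_) ?_ hc
    · rw [lor_neg_left, hu i, neg_zero]
    · rw [lor_comm, lor_neg_left, lor_comm]; linarith

lemma mem_Hyp_of_isCompact_polyhedron {v : Fin 4 → (Fin 4 → ℝ)} {a z : Fin 4 → ℝ}
    (hc : IsCompact (polyhedron v)) (ha : a ∈ Hyp) (hav : ∀ i, 0 < lor a (v i))
    (hz : lor z z = -1) (hzv : ∀ i, 0 ≤ lor z (v i)) : z ∈ Hyp := by
  refine ⟨hz, ?_⟩
  by_contra hz0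
  have hza : 1 ≤ lor a z := by
    have := lor_le_neg_one ha (neg_mem_Hyp hz hz0)
    rw [lor_comm, lor_neg_left, lor_comm] at this
    linarith
  refine not_isCompact_polyhedron_of_direction ha hav ?_ hzv (by linarith) hc
  rintro rfl
  simp [lor] at hz

lemma mapsTo_Hyp {ρ : (Fin 4 → ℝ) → (Fin 4 → ℝ)} (hρ : ∀ x y, lor (ρ x) (ρ y) = lor x y)
    {a : Fin 4 → ℝ} (ha : a ∈ Hyp) (hρa : ρ a ∈ Hyp) : Set.MapsTo ρ Hyp Hyp := fun x hx =>
  mem_Hyp_of_lor_neg (by rw [hρ, hx.1]) hρa (by rw [hρ]; linarith [lor_le_neg_one hx ha])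

lemma image_polyhedron {ρ : (Fin 4 → ℝ) → (Fin 4 → ℝ)} (hρ : ∀ x y, lor (ρ x) (ρ y) = lor x y)
    (hHyp : ρ '' Hyp = Hyp) {v v' : Fin 4 → (Fin 4 → ℝ)} (hv : ∀ i, ρ (v i) = v' i) :
    ρ '' polyhedron v = polyhedron v' := by
  ext y
  constructor
  · rintro ⟨x, ⟨hx, hxv⟩, rfl⟩
    exact ⟨hHyp ▸ Set.mem_image_of_mem ρ hx, fun i => by rw [← hv, hρ]; exact hxv i⟩
  · rintro ⟨hy, hyv⟩
    rw [← hHyp] at hy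
    obtain ⟨x, hx, rfl⟩ := hy
    exact ⟨x, ⟨hx, fun i => by rw [← hρ, hv]; exact hyv i⟩, rfl⟩

/-- Uniqueness: two compact hyperbolic tetrahedra with the same Gram matrix
(equivalently, the same dihedral angles) differ by a hyperbolic isometry. -/
theorem tetrahedron_unique_up_to_isometry (v v' : Fin 4 → (Fin 4 → ℝ))
    (hunit : ∀ i, lor (v i) (v i) = 1) (hunit' : ∀ i, lor (v' i) (v' i) = 1)
    (hcompact : IsCompact (polyhedron v)) (hcompact' : IsCompact (polyhedron v'))
    (hint : (interior ((Subtype.val : Hyp → (Fin 4 → ℝ)) ⁻¹' polyhedron v)).Nonempty)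
    (hint' : (interior ((Subtype.val : Hyp → (Fin 4 → ℝ)) ⁻¹' polyhedron v')).Nonempty)
    (hgram : ∀ i j, lor (v i) (v j) = lor (v' i) (v' j)) :
    ∃ ρ : (Fin 4 → ℝ) ≃ₗ[ℝ] (Fin 4 → ℝ),
      (∀ x y : Fin 4 → ℝ, lor (ρ x) (ρ y) = lor x y) ∧
      (ρ '' Hyp = Hyp) ∧
      (∀ i, ρ (v i) = v' i) ∧
      ρ '' polyhedron v = polyhedron v' := by
  obtain ⟨a, ha, hav⟩ := exists_lor_pos_of_interior_nonempty hunit hint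
  obtain ⟨a', ha', hav'⟩ := exists_lor_pos_of_interior_nonempty hunit' hint'
  have hcard : Fintype.card (Fin 4) = Module.finrank ℝ (Fin 4 → ℝ) := by simp
  let b := basisOfLinearIndependentOfCardEqFinrank
    (linearIndependent_of_isCompact_polyhedron hcompact ha hav) hcard
  let b' := basisOfLinearIndependentOfCardEqFinrank
    (linearIndependent_of_isCompact_polyhedron hcompact' ha' hav') hcard
  let ρ := b.equiv b' (Equiv.refl _)
  have hρv : ∀ i, ρ (v i) = v' i := fun i => by
    simpa [b, b'] using b.equiv_apply i b' (Equiv.refl _)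
  have hρ : ∀ x y, lor (ρ x) (ρ y) = lor x y := b.equiv_preserves_bilin lorForm b' fun i j => by
    simpa [b, b'] using (hgram i j).symm
  have hρsymm : ∀ x y, lor (ρ.symm x) (ρ.symm y) = lor x y := fun x y => by
    rw [← hρ, ρ.apply_symm_apply, ρ.apply_symm_apply]
  have hρa : ρ a ∈ Hyp := mem_Hyp_of_isCompact_polyhedron hcompact' ha' hav'
    (by rw [hρ, ha.1]) fun i => by rw [← hρv, hρ]; exact (hav i).le
  have hHyp : ρ '' Hyp = Hyp := (mapsTo_Hyp hρ ha hρa).image_subset.antisymm fun y hy =>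
    ⟨ρ.symm y, mapsTo_Hyp hρsymm hρa (by rwa [ρ.symm_apply_apply]) hy, ρ.apply_symm_apply y⟩
  exact ⟨ρ, hρ, hHyp, hρv, image_polyhedron hρ hHyp hρv⟩
end

section
/- Let α_{ij} = α_{ji} ∈ (0, π/2] for all unordered pairs {i,j} ⊂ {1,2,3,4}, and let M(α) be the 4×4 symmetric matrix with diagonal entries 1 and off-diagonal entries M_{ij} = −cos α_{ij}. Then det M(α) < 0 and every proper principal submatrix of M(α) is positive definite if and only if the following two conditions hold: (2) for each i, writing {j,k,l} = {1,2,3,4}∖{i}, α_{jk} + α_{kl} + α_{jl} > π; and (3) for each face i with {j,k,l} = {1,2,3,4}∖{i}, arccos((cos α_{kl} + cos α_{ik} cos α_{il})/(sin α_{ik} sin α_{il})) + arccos((cos α_{jl} + cos α_{ij} cos α_{il})/(sin α_{ij} sin α_{il})) + arccos((cos α_{jk} + cos α_{ij} cos α_{ik})/(sin α_{ij} sin α_{ik})) < π. -/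
/-!
Both kinds of condition come from one fact about the spherical triangle with angles `a, b, c`
in `(0, π/2]`: the determinant `1 - cos²a - cos²b - cos²c - 2 cos a cos b cos c` factors as
`-(cos a + cos (b + c)) (cos a + cos (b - c))`, whose second factor is positive, so it is positive
iff `a + b + c > π` and negative iff `a + b + c < π`. Applied to the `3 × 3` principal minors this
turns their positive definiteness into the vertex conditions. Bringing vertex `i` to the front,
the `4 × 4` determinant equals `(sin α_ij sin α_ik sin α_il)²` times the same determinant for the
cosines of the face angles at vertex `i` (the polar law of cosines), so `det M(α) < 0` is the
face condition at any single vertex.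
-/

open Real

/-- The proposed Gram matrix associated to a symmetric array of dihedral angles. -/
noncomputable def gramOf (α : Fin 4 → Fin 4 → ℝ) : Matrix (Fin 4) (Fin 4) ℝ :=
  Matrix.of fun i j => if i = j then 1 else -Real.cos (α i j)

open Function Matrix Set

theorem Matrix.PosDef.submatrix_of_range_subset {l m n R : Type*} [Ring R] [PartialOrder R]
    [StarRing R] {M : Matrix n n R} {f : m → n} {g : l → n}
    (hM : (M.submatrix f f).PosDef) (hg : Injective g) (hgf : range g ⊆ range f) :
    (M.submatrix g g).PosDef := by
  choose h hh using fun x => hgf (mem_range_self x)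
  have hinj : Injective h := fun x y hxy => hg (by rw [← hh x, ← hh y, hxy])
  simpa [submatrix_submatrix, comp_def, hh] using hM.submatrix hinj

lemma cos_add_cos_neg_iff {x y : ℝ} (hx : x ∈ Icc 0 π) (hy : y ∈ Icc 0 π) :
    cos x + cos y < 0 ↔ π < x + y := by
  have hy' : π - y ∈ Icc 0 π := ⟨by linarith [hy.2], by linarith [hy.1]⟩
  rw [← sub_neg_eq_add, sub_neg, ← cos_pi_sub, strictAntiOn_cos.lt_iff_gt hx hy']
  constructor <;> intro h <;> linarith

lemma cos_add_cos_pos_iff {x y : ℝ} (hx : x ∈ Icc 0 π) (hy : y ∈ Icc 0 π) :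
    0 < cos x + cos y ↔ x + y < π := by
  have hy' : π - y ∈ Icc 0 π := ⟨by linarith [hy.2], by linarith [hy.1]⟩
  rw [← sub_neg_eq_add, sub_pos, ← cos_pi_sub, strictAntiOn_cos.lt_iff_gt hy' hx]
  constructor <;> intro h <;> linarith

lemma cos_nonneg_of_mem_Ioc {t : ℝ} (ht : t ∈ Ioc 0 (π / 2)) : 0 ≤ cos t :=
  cos_nonneg_of_mem_Icc ⟨by linarith [ht.1, pi_pos], ht.2⟩

lemma sin_pos_of_mem_Ioc {t : ℝ} (ht : t ∈ Ioc 0 (π / 2)) : 0 < sin t :=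
  sin_pos_of_pos_of_lt_pi ht.1 (by linarith [ht.2, pi_pos])

def unitGram3 (a b c : ℝ) : Matrix (Fin 3) (Fin 3) ℝ :=
  !![1, -a, -b; -a, 1, -c; -b, -c, 1]

def unitGram4 (a b c d e f : ℝ) : Matrix (Fin 4) (Fin 4) ℝ :=
  !![1, -a, -b, -c; -a, 1, -d, -e; -b, -d, 1, -f; -c, -e, -f, 1]

lemma det_unitGram3 (a b c : ℝ) :
    (unitGram3 a b c).det = 1 - a ^ 2 - b ^ 2 - c ^ 2 - 2 * a * b * c := by
  simp only [unitGram3, det_fin_three, of_apply, cons_val, Fin.isValue]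
  ring

lemma det_unitGram4 (a b c d e f : ℝ) :
    (unitGram4 a b c d e f).det =
      (1 - a ^ 2) * (1 - b ^ 2) * (1 - c ^ 2) - (f + b * c) ^ 2 * (1 - a ^ 2)
        - (e + a * c) ^ 2 * (1 - b ^ 2) - (d + a * b) ^ 2 * (1 - c ^ 2)
        - 2 * (f + b * c) * (e + a * c) * (d + a * b) := by
  rw [unitGram4, det_succ_row_zero]
  simp [Fin.sum_univ_four, det_fin_three, Fin.succAbove]
  ring

lemma posDef_unitGram3 {a b c : ℝ} (ha : a ^ 2 < 1) (hdet : 0 < (unitGram3 a b c).det) :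
    (unitGram3 a b c).PosDef := by
  rw [det_unitGram3] at hdet
  refine .of_dotProduct_mulVec_pos ?_ fun x hx => ?_
  · ext i j; fin_cases i <;> fin_cases j <;> simp [unitGram3]
  have hform : star x ⬝ᵥ (unitGram3 a b c *ᵥ x) =
      x 0 ^ 2 + x 1 ^ 2 + x 2 ^ 2 - 2 * a * x 0 * x 1 - 2 * b * x 0 * x 2
        - 2 * c * x 1 * x 2 := by
    simp only [unitGram3, dotProduct, mulVec, of_apply, cons_val, Fin.sum_univ_three,
      Pi.star_apply, star_trivial, Fin.isValue]
    ring
  rw [hform]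
  have ha' : 0 < 1 - a ^ 2 := by linarith
  -- completing the square twice (the 3 × 3 case of Sylvester's criterion)
  have hsq : (1 - a ^ 2) * (x 0 ^ 2 + x 1 ^ 2 + x 2 ^ 2 - 2 * a * x 0 * x 1
        - 2 * b * x 0 * x 2 - 2 * c * x 1 * x 2) =
      (1 - a ^ 2) * (x 0 - a * x 1 - b * x 2) ^ 2 + ((1 - a ^ 2) * x 1 - (c + a * b) * x 2) ^ 2
        + (1 - a ^ 2 - b ^ 2 - c ^ 2 - 2 * a * b * c) * x 2 ^ 2 := by
    ring
  refine pos_of_mul_pos_right (hsq ▸ ?_) ha'.le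
  have t1 := mul_nonneg ha'.le (sq_nonneg (x 0 - a * x 1 - b * x 2))
  have t2 := sq_nonneg ((1 - a ^ 2) * x 1 - (c + a * b) * x 2)
  rcases ne_or_eq (x 2) 0 with h2 | h2
  · have : 0 < x 2 ^ 2 := by positivity
    nlinarith
  rcases ne_or_eq (x 1) 0 with h1 | h1
  · have : 0 < ((1 - a ^ 2) * x 1) ^ 2 := by positivity
    simp only [h2]; nlinarith
  have h0 : x 0 ≠ 0 := fun h0 => hx (by ext i; fin_cases i <;> assumption)
  have : 0 < x 0 ^ 2 := by positivity
  simp only [h1, h2]; nlinarith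

lemma det_unitGram3_cos (a b c : ℝ) :
    (unitGram3 (cos a) (cos b) (cos c)).det = -(cos a + cos (b + c)) * (cos a + cos (b - c)) := by
  rw [det_unitGram3, cos_add, cos_sub]
  linear_combination (cos c ^ 2 - 1) * sin_sq_add_cos_sq b - sin b ^ 2 * sin_sq_add_cos_sq c

lemma cos_add_cos_sub_pos {a b c : ℝ} (ha : a ∈ Ioc 0 (π / 2)) (hb : b ∈ Ioc 0 (π / 2))
    (hc : c ∈ Ioc 0 (π / 2)) : 0 < cos a + cos (b - c) := by
  have := cos_nonneg_of_mem_Ioc ha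
  have : 0 < cos (b - c) :=
    cos_pos_of_mem_Ioo ⟨by linarith [hb.1, hc.2], by linarith [hb.2, hc.1]⟩
  linarith

lemma det_unitGram3_cos_pos_iff {a b c : ℝ} (ha : a ∈ Ioc 0 (π / 2)) (hb : b ∈ Ioc 0 (π / 2))
    (hc : c ∈ Ioc 0 (π / 2)) :
    0 < (unitGram3 (cos a) (cos b) (cos c)).det ↔ π < a + b + c := by
  rw [det_unitGram3_cos, mul_pos_iff_of_pos_right (cos_add_cos_sub_pos ha hb hc), neg_pos,
    add_assoc, cos_add_cos_neg_iff ⟨ha.1.le, by linarith [ha.2, pi_pos]⟩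
      ⟨by linarith [hb.1, hc.1], by linarith [hb.2, hc.2]⟩]

lemma det_unitGram3_cos_neg_iff {a b c : ℝ} (ha : a ∈ Ioc 0 (π / 2)) (hb : b ∈ Ioc 0 (π / 2))
    (hc : c ∈ Ioc 0 (π / 2)) :
    (unitGram3 (cos a) (cos b) (cos c)).det < 0 ↔ a + b + c < π := by
  rw [← neg_pos, det_unitGram3_cos, neg_mul, neg_neg,
    mul_pos_iff_of_pos_right (cos_add_cos_sub_pos ha hb hc), add_assoc,
    cos_add_cos_pos_iff ⟨ha.1.le, by linarith [ha.2, pi_pos]⟩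
      ⟨by linarith [hb.1, hc.1], by linarith [hb.2, hc.2]⟩]

lemma posDef_unitGram3_cos_iff {a b c : ℝ} (ha : a ∈ Ioc 0 (π / 2)) (hb : b ∈ Ioc 0 (π / 2))
    (hc : c ∈ Ioc 0 (π / 2)) :
    (unitGram3 (cos a) (cos b) (cos c)).PosDef ↔ π < a + b + c := by
  rw [← det_unitGram3_cos_pos_iff ha hb hc]
  refine ⟨fun h => h.det_pos, posDef_unitGram3 ?_⟩
  rw [← sin_sq_add_cos_sq a, lt_add_iff_pos_left]
  exact pow_pos (sin_pos_of_mem_Ioc ha) 2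

/-- Side opposite the angle `u` of a spherical triangle with angles `u`, `v`, `w`, by the
polar law of cosines. -/
noncomputable def faceAngle (u v w : ℝ) : ℝ :=
  arccos ((cos u + cos v * cos w) / (sin v * sin w))

lemma faceAngle_arg_mem_Ico {u v w : ℝ} (hu : u ∈ Ioc 0 (π / 2)) (hv : v ∈ Ioc 0 (π / 2))
    (hw : w ∈ Ioc 0 (π / 2)) (hsum : π < u + v + w) :
    (cos u + cos v * cos w) / (sin v * sin w) ∈ Ico 0 1 := by
  have hcu := cos_nonneg_of_mem_Ioc hu
  have hcv := cos_nonneg_of_mem_Ioc hv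
  have hcw := cos_nonneg_of_mem_Ioc hw
  have hsv := sin_pos_of_mem_Ioc hv
  have hsw := sin_pos_of_mem_Ioc hw
  have hneg : cos u + cos (v + w) < 0 :=
    (cos_add_cos_neg_iff ⟨hu.1.le, by linarith [hu.2, pi_pos]⟩
      ⟨by linarith [hv.1, hw.1], by linarith [hv.2, hw.2]⟩).2 (by linarith)
  rw [cos_add] at hneg
  exact ⟨by positivity, (div_lt_one (by positivity)).2 (by linarith)⟩

lemma faceAngle_mem_Ioc {u v w : ℝ} (hu : u ∈ Ioc 0 (π / 2)) (hv : v ∈ Ioc 0 (π / 2))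
    (hw : w ∈ Ioc 0 (π / 2)) (hsum : π < u + v + w) : faceAngle u v w ∈ Ioc 0 (π / 2) :=
  have h := faceAngle_arg_mem_Ico hu hv hw hsum
  ⟨arccos_pos.2 h.2, arccos_le_pi_div_two.2 h.1⟩

lemma cos_faceAngle {u v w : ℝ} (hu : u ∈ Ioc 0 (π / 2)) (hv : v ∈ Ioc 0 (π / 2))
    (hw : w ∈ Ioc 0 (π / 2)) (hsum : π < u + v + w) :
    cos (faceAngle u v w) = (cos u + cos v * cos w) / (sin v * sin w) :=
  have h := faceAngle_arg_mem_Ico hu hv hw hsum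
  cos_arccos (by linarith [h.1]) h.2.le

lemma det_unitGram4_cos {A B C : ℝ} (D E F : ℝ) (hA : sin A ≠ 0) (hB : sin B ≠ 0)
    (hC : sin C ≠ 0) :
    (unitGram4 (cos A) (cos B) (cos C) (cos D) (cos E) (cos F)).det =
      (sin A * sin B * sin C) ^ 2 *
        (unitGram3 ((cos F + cos B * cos C) / (sin B * sin C))
          ((cos E + cos A * cos C) / (sin A * sin C))
          ((cos D + cos A * cos B) / (sin A * sin B))).det := by
  rw [det_unitGram4, det_unitGram3, ← sin_sq A, ← sin_sq B, ← sin_sq C]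
  field_simp

lemma det_unitGram4_cos_neg_iff {A B C D E F : ℝ} (hA : A ∈ Ioc 0 (π / 2))
    (hB : B ∈ Ioc 0 (π / 2)) (hC : C ∈ Ioc 0 (π / 2)) (hD : D ∈ Ioc 0 (π / 2))
    (hE : E ∈ Ioc 0 (π / 2)) (hF : F ∈ Ioc 0 (π / 2))
    (hBCF : π < B + F + C) (hACE : π < A + E + C) (hABD : π < A + D + B) :
    (unitGram4 (cos A) (cos B) (cos C) (cos D) (cos E) (cos F)).det < 0 ↔
      faceAngle F B C + faceAngle E A C + faceAngle D A B < π := by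
  have hsA := sin_pos_of_mem_Ioc hA
  have hsB := sin_pos_of_mem_Ioc hB
  have hsC := sin_pos_of_mem_Ioc hC
  replace hBCF : π < F + B + C := by linarith
  replace hACE : π < E + A + C := by linarith
  replace hABD : π < D + A + B := by linarith
  rw [det_unitGram4_cos D E F hsA.ne' hsB.ne' hsC.ne', ← cos_faceAngle hF hB hC hBCF,
    ← cos_faceAngle hE hA hC hACE, ← cos_faceAngle hD hA hB hABD, ← neg_pos, ← mul_neg,
    mul_pos_iff_of_pos_left (by positivity), neg_pos]
  exact det_unitGram3_cos_neg_iff (faceAngle_mem_Ioc hF hB hC hBCF)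
    (faceAngle_mem_Ioc hE hA hC hACE) (faceAngle_mem_Ioc hD hA hB hABD)

lemma gramOf_submatrix_fin_three {α : Fin 4 → Fin 4 → ℝ} (hsymm : ∀ i j, α i j = α j i)
    {f : Fin 3 → Fin 4} (hf : Injective f) :
    (gramOf α).submatrix f f =
      unitGram3 (cos (α (f 0) (f 1))) (cos (α (f 0) (f 2))) (cos (α (f 1) (f 2))) := by
  ext i j
  fin_cases i <;> fin_cases j <;> simp [gramOf, unitGram3, hf.eq_iff, hsymm (f 1) (f 0),
    hsymm (f 2) (f 0), hsymm (f 2) (f 1)]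

lemma gramOf_submatrix_fin_four {α : Fin 4 → Fin 4 → ℝ} (hsymm : ∀ i j, α i j = α j i)
    {f : Fin 4 → Fin 4} (hf : Injective f) :
    (gramOf α).submatrix f f =
      unitGram4 (cos (α (f 0) (f 1))) (cos (α (f 0) (f 2))) (cos (α (f 0) (f 3)))
        (cos (α (f 1) (f 2))) (cos (α (f 1) (f 3))) (cos (α (f 2) (f 3))) := by
  ext i j
  fin_cases i <;> fin_cases j <;> simp [gramOf, unitGram4, hf.eq_iff, hsymm (f 1) (f 0),
    hsymm (f 2) (f 0), hsymm (f 3) (f 0), hsymm (f 2) (f 1), hsymm (f 3) (f 1), hsymm (f 3) (f 2)]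

lemma posDef_gramOf_submatrix_iff {α : Fin 4 → Fin 4 → ℝ} (hsymm : ∀ i j, α i j = α j i)
    (hrange : ∀ i j, i ≠ j → α i j ∈ Ioc 0 (π / 2)) {f : Fin 3 → Fin 4} (hf : Injective f) :
    ((gramOf α).submatrix f f).PosDef ↔ π < α (f 0) (f 1) + α (f 1) (f 2) + α (f 0) (f 2) := by
  rw [gramOf_submatrix_fin_three hsymm hf,
    posDef_unitGram3_cos_iff (hrange _ _ (hf.ne (by decide))) (hrange _ _ (hf.ne (by decide)))
      (hrange _ _ (hf.ne (by decide))), add_right_comm]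

lemma det_gramOf_neg_iff {α : Fin 4 → Fin 4 → ℝ} (hsymm : ∀ i j, α i j = α j i)
    (hrange : ∀ i j, i ≠ j → α i j ∈ Ioc 0 (π / 2))
    (hvertex : ∀ i j k l : Fin 4, i ≠ j → i ≠ k → i ≠ l → j ≠ k → j ≠ l → k ≠ l →
      π < α j k + α k l + α j l)
    {i j k l : Fin 4} (hij : i ≠ j) (hik : i ≠ k) (hil : i ≠ l) (hjk : j ≠ k) (hjl : j ≠ l)
    (hkl : k ≠ l) :
    (gramOf α).det < 0 ↔
      faceAngle (α k l) (α i k) (α i l) + faceAngle (α j l) (α i j) (α i l) +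
        faceAngle (α j k) (α i j) (α i k) < π := by
  have hf : Injective ![i, j, k, l] := by
    simp only [Matrix.vecCons, Fin.cons_injective_iff]
    simp [*, Injective, eq_iff_true_of_subsingleton]
  rw [← det_submatrix_equiv_self (.ofBijective _ hf.bijective_of_finite),
    Equiv.coe_ofBijective, gramOf_submatrix_fin_four hsymm hf]
  exact det_unitGram4_cos_neg_iff (hrange _ _ hij) (hrange _ _ hik) (hrange _ _ hil)
    (hrange _ _ hjk) (hrange _ _ hjl) (hrange _ _ hkl)
    (hvertex j i k l hij.symm hjk hjl hik hil hkl)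
    (hvertex k i j l hik.symm hjk.symm hkl hij hil hjl)
    (hvertex l i j k hil.symm hjl.symm hkl.symm hij hik hjk)

lemma forall_posDef_gramOf_submatrix_iff {α : Fin 4 → Fin 4 → ℝ}
    (hsymm : ∀ i j, α i j = α j i) (hrange : ∀ i j, i ≠ j → α i j ∈ Ioc 0 (π / 2)) :
    (∀ s : Finset (Fin 4), s ≠ Finset.univ →
        ((gramOf α).submatrix (fun i : s => (i : Fin 4)) (fun i : s => (i : Fin 4))).PosDef) ↔
      ∀ i j k l : Fin 4, i ≠ j → i ≠ k → i ≠ l → j ≠ k → j ≠ l → k ≠ l →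
        π < α j k + α k l + α j l := by
  constructor
  · intro hpd i j k l hij hik hil hjk hjl hkl
    have hf : Injective ![j, k, l] := by
      simp only [Matrix.vecCons, Fin.cons_injective_iff]
      simp [*, Injective, eq_iff_true_of_subsingleton]
    have hs : ({j, k, l} : Finset (Fin 4)) ≠ Finset.univ := by
      simpa [Finset.eq_univ_iff_forall] using ⟨i, by simp [hij, hik, hil]⟩
    exact (posDef_gramOf_submatrix_iff hsymm hrange hf).1
      ((hpd _ hs).submatrix_of_range_subset hf (by simp [Set.insert_subset_iff]))
  · intro hvertex s hs
    obtain ⟨i, hi⟩ : ∃ i, i ∉ s := by simpa [Finset.eq_univ_iff_forall] using hs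
    have hpd : ((gramOf α).submatrix i.succAbove i.succAbove).PosDef :=
      (posDef_gramOf_submatrix_iff hsymm hrange Fin.succAbove_right_injective).2
        (hvertex i _ _ _ (by simp) (by simp) (by simp) (by simp) (by simp) (by simp))
    refine hpd.submatrix_of_range_subset Subtype.val_injective ?_
    rintro _ ⟨x, rfl⟩
    rw [Fin.range_succAbove]
    exact fun h => hi (h ▸ x.2)

/-- For non-obtuse angles, Milnor's Gram-matrix conditions are equivalent to the
vertex conditions (2) and face-angle conditions (3) of Theorem 3. -/
theorem gram_conditions_iff_vertex_and_face_conditions (α : Fin 4 → Fin 4 → ℝ)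
    (hsymm : ∀ i j, α i j = α j i)
    (hrange : ∀ i j, i ≠ j → α i j ∈ Set.Ioc 0 (π / 2)) :
    ((gramOf α).det < 0 ∧
      ∀ s : Finset (Fin 4), s ≠ Finset.univ →
        ((gramOf α).submatrix (fun i : s => (i : Fin 4)) (fun i : s => (i : Fin 4))).PosDef)
    ↔ ((∀ i j k l : Fin 4, i ≠ j → i ≠ k → i ≠ l → j ≠ k → j ≠ l → k ≠ l →
          π < α j k + α k l + α j l) ∧
       (∀ i j k l : Fin 4, i ≠ j → i ≠ k → i ≠ l → j ≠ k → j ≠ l → k ≠ l →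
          Real.arccos ((Real.cos (α k l) + Real.cos (α i k) * Real.cos (α i l)) /
              (Real.sin (α i k) * Real.sin (α i l))) +
          Real.arccos ((Real.cos (α j l) + Real.cos (α i j) * Real.cos (α i l)) /
              (Real.sin (α i j) * Real.sin (α i l))) +
          Real.arccos ((Real.cos (α j k) + Real.cos (α i j) * Real.cos (α i k)) /
              (Real.sin (α i j) * Real.sin (α i k))) < π)) := by
  rw [← forall_posDef_gramOf_submatrix_iff hsymm hrange]
  constructor
  · rintro ⟨hdet, hpd⟩
    have hvertex := (forall_posDef_gramOf_submatrix_iff hsymm hrange).1 hpd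
    exact ⟨hpd, fun i j k l hij hik hil hjk hjl hkl =>
      (det_gramOf_neg_iff hsymm hrange hvertex hij hik hil hjk hjl hkl).1 hdet⟩
  · rintro ⟨hpd, hface⟩
    have hvertex := (forall_posDef_gramOf_submatrix_iff hsymm hrange).1 hpd
    refine ⟨(det_gramOf_neg_iff hsymm hrange hvertex (i := 0) (j := 1) (k := 2) (l := 3)
      ?_ ?_ ?_ ?_ ?_ ?_).2 (hface 0 1 2 3 ?_ ?_ ?_ ?_ ?_ ?_), hpd⟩
    all_goals decide
end

section
/- Let α_{ij} = α_{ji} ∈ (0, π/2] for all unordered pairs {i,j} ⊂ {1,2,3,4}, and let M be the 4×4 symmetric matrix with diagonal entries 1 and M_{ij} = −cos α_{ij} for i ≠ j. Suppose for each pair {j,k} ⊂ {1,2,3} the quantity (cos α_{jk} + cos α_{j4}·cos α_{k4})/(sin α_{j4}·sin α_{k4}) lies in [−1, 1], and let β₁ = arccos((cos α_{23} + cos α_{24} cos α_{34})/(sin α_{24} sin α_{34})), β₂ = arccos((cos α_{13} + cos α_{14} cos α_{34})/(sin α_{14} sin α_{34})), β₃ = arccos((cos α_{12} + cos α_{14}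 cos α_{24})/(sin α_{14} sin α_{24})) be the face angles of face 4. Then det M = −4·(1 − cos²α_{14})·(1 − cos²α_{24})·(1 − cos²α_{34})·cos((β₁+β₂+β₃)/2)·cos((β₁−β₂+β₃)/2)·cos((β₁+β₂−β₃)/2)·cos((−β₁+β₂+β₃)/2). -/
/-!
Eliminating the fourth row and column (a Schur complement with respect to face 4) gives
`det M = -(sin α₁₄ sin α₂₄ sin α₃₄)² · (cos² β₁ + cos² β₂ + cos² β₃ - 1 + 2 cos β₁ cos β₂ cos β₃)`,
because by the spherical law of cosines `cos α_jk + cos α_j4 cos α_k4 = cos β_i sin α_j4 sin α_k4`.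
Pairing the four half-angle cosines with `cos_add_cos` factors the bracket as `4 ∏ cos ((±β₁ ± β₂ ± β₃) / 2)`.
-/

open Real

theorem Real.four_mul_cos_half_sums_prod (x y z : ℝ) :
    4 * cos ((x + y + z) / 2) * cos ((x - y + z) / 2) *
        cos ((x + y - z) / 2) * cos ((-x + y + z) / 2) =
      cos x ^ 2 + cos y ^ 2 + cos z ^ 2 - 1 + 2 * cos x * cos y * cos z := by
  have outer : cos (x + z) + cos y = 2 * cos ((x + y + z) / 2) * cos ((x - y + z) / 2) := by
    rw [cos_add_cos]; ring_nf
  have inner : cos y + cos (x - z) = 2 * cos ((x + y - z) / 2) * cos ((-x + y + z) / 2) := by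
    rw [cos_add_cos]; ring_nf
  calc 4 * cos ((x + y + z) / 2) * cos ((x - y + z) / 2) *
          cos ((x + y - z) / 2) * cos ((-x + y + z) / 2)
        = (cos (x + z) + cos y) * (cos y + cos (x - z)) := by rw [outer, inner]; ring
    _ = cos x ^ 2 + cos y ^ 2 + cos z ^ 2 - 1 + 2 * cos x * cos y * cos z := by
        rw [cos_add, cos_sub]
        linear_combination (-sin z ^ 2) * sin_sq x + (cos x ^ 2 - 1) * sin_sq z

theorem det_unit_diag_neg_symm_fin_four {R : Type*} [CommRing R] (a b c d e f : R) :
    (!![1, -a, -b, -d; -a, 1, -c, -e; -b, -c, 1, -f; -d, -e, -f, 1] :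
        Matrix (Fin 4) (Fin 4) R).det =
      -((1 - d ^ 2) * (c + e * f) ^ 2 + (1 - e ^ 2) * (b + d * f) ^ 2 +
          (1 - f ^ 2) * (a + d * e) ^ 2 - (1 - d ^ 2) * (1 - e ^ 2) * (1 - f ^ 2) +
          2 * (c + e * f) * (b + d * f) * (a + d * e)) := by
  rw [Matrix.det_succ_row_zero, Fin.sum_univ_four]
  simp only [Matrix.det_fin_three, Matrix.submatrix_apply, Matrix.of_apply, Matrix.cons_val',
    Matrix.cons_val, Matrix.cons_val_fin_one, Fin.succAbove, Fin.isValue, Fin.reduceSucc,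
    Fin.reduceCastSucc, Fin.reduceLT, reduceIte, Fin.coe_ofNat_eq_mod]
  ring

theorem det_unit_diag_neg_symm_fin_four_of_law_of_cosines {R : Type*} [CommRing R]
    {a b c d e f u v w x₁ x₂ x₃ : R} (hu : u ^ 2 + d ^ 2 = 1) (hv : v ^ 2 + e ^ 2 = 1)
    (hw : w ^ 2 + f ^ 2 = 1) (h₁ : c + e * f = x₁ * (v * w)) (h₂ : b + d * f = x₂ * (u * w))
    (h₃ : a + d * e = x₃ * (u * v)) :
    (!![1, -a, -b, -d; -a, 1, -c, -e; -b, -c, 1, -f; -d, -e, -f, 1] :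
        Matrix (Fin 4) (Fin 4) R).det =
      -(u * v * w) ^ 2 * (x₁ ^ 2 + x₂ ^ 2 + x₃ ^ 2 - 1 + 2 * x₁ * x₂ * x₃) := by
  rw [det_unit_diag_neg_symm_fin_four, h₁, h₂, h₃, ← eq_sub_of_add_eq hu,
    ← eq_sub_of_add_eq hv, ← eq_sub_of_add_eq hw]
  ring

theorem Real.cos_arccos_div_mul {p q : ℝ} (hpq : p / q ∈ Set.Icc (-1 : ℝ) 1) (hq : q ≠ 0) :
    cos (arccos (p / q)) * q = p := by
  rw [cos_arccos hpq.1 hpq.2, div_mul_cancel₀ p hq]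

theorem Real.sin_pos_of_mem_Ioc_zero_pi_div_two {x : ℝ} (hx : x ∈ Set.Ioc 0 (π / 2)) :
    0 < sin x :=
  sin_pos_of_pos_of_lt_pi hx.1 (hx.2.trans_lt (by linarith [pi_pos]))

theorem det_gram_eq_face_angle_product_general
    (a12 a13 a14 a23 a24 a34 : ℝ)
    (h23 : (Real.cos a23 + Real.cos a24 * Real.cos a34) /
        (Real.sin a24 * Real.sin a34) ∈ Set.Icc (-1 : ℝ) 1)
    (h13 : (Real.cos a13 + Real.cos a14 * Real.cos a34) /
        (Real.sin a14 * Real.sin a34) ∈ Set.Icc (-1 : ℝ) 1)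
    (h12 : (Real.cos a12 + Real.cos a14 * Real.cos a24) /
        (Real.sin a14 * Real.sin a24) ∈ Set.Icc (-1 : ℝ) 1)
    (h14 : a14 ∈ Set.Ioc 0 (π / 2)) (h24 : a24 ∈ Set.Ioc 0 (π / 2))
    (h34 : a34 ∈ Set.Ioc 0 (π / 2))
    (β₁ β₂ β₃ : ℝ)
    (hβ₁ : β₁ = Real.arccos ((Real.cos a23 + Real.cos a24 * Real.cos a34) /
        (Real.sin a24 * Real.sin a34)))
    (hβ₂ : β₂ = Real.arccos ((Real.cos a13 + Real.cos a14 * Real.cos a34) /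
        (Real.sin a14 * Real.sin a34)))
    (hβ₃ : β₃ = Real.arccos ((Real.cos a12 + Real.cos a14 * Real.cos a24) /
        (Real.sin a14 * Real.sin a24))) :
    (!![1, -Real.cos a12, -Real.cos a13, -Real.cos a14;
        -Real.cos a12, 1, -Real.cos a23, -Real.cos a24;
        -Real.cos a13, -Real.cos a23, 1, -Real.cos a34;
        -Real.cos a14, -Real.cos a24, -Real.cos a34, 1] :
      Matrix (Fin 4) (Fin 4) ℝ).det =
    -4 * (1 - Real.cos a14 ^ 2) * (1 - Real.cos a24 ^ 2) * (1 - Real.cos a34 ^ 2) *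
      Real.cos ((β₁ + β₂ + β₃) / 2) * Real.cos ((β₁ - β₂ + β₃) / 2) *
      Real.cos ((β₁ + β₂ - β₃) / 2) * Real.cos ((-β₁ + β₂ + β₃) / 2) := by
  have s14 := (sin_pos_of_mem_Ioc_zero_pi_div_two h14).ne'
  have s24 := (sin_pos_of_mem_Ioc_zero_pi_div_two h24).ne'
  have s34 := (sin_pos_of_mem_Ioc_zero_pi_div_two h34).ne'
  have law₁ := cos_arccos_div_mul h23 (mul_ne_zero s24 s34)
  have law₂ := cos_arccos_div_mul h13 (mul_ne_zero s14 s34)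
  have law₃ := cos_arccos_div_mul h12 (mul_ne_zero s14 s24)
  rw [← hβ₁] at law₁
  rw [← hβ₂] at law₂
  rw [← hβ₃] at law₃
  rw [det_unit_diag_neg_symm_fin_four_of_law_of_cosines (sin_sq_add_cos_sq a14)
    (sin_sq_add_cos_sq a24) (sin_sq_add_cos_sq a34) law₁.symm law₂.symm law₃.symm,
    ← four_mul_cos_half_sums_prod, ← sin_sq, ← sin_sq, ← sin_sq]
  ring

theorem det_gram_eq_face_angle_product
    (a12 a13 a14 a23 a24 a34 : ℝ)
    (h23 : (Real.cos a23 + Real.cos a24 * Real.cos a34) /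
        (Real.sin a24 * Real.sin a34) ∈ Set.Icc (-1 : ℝ) 1)
    (h13 : (Real.cos a13 + Real.cos a14 * Real.cos a34) /
        (Real.sin a14 * Real.sin a34) ∈ Set.Icc (-1 : ℝ) 1)
    (h12 : (Real.cos a12 + Real.cos a14 * Real.cos a24) /
        (Real.sin a14 * Real.sin a24) ∈ Set.Icc (-1 : ℝ) 1)
    (h14 : a14 ∈ Set.Ioc 0 (π / 2)) (h24 : a24 ∈ Set.Ioc 0 (π / 2))
    (h34 : a34 ∈ Set.Ioc 0 (π / 2))
    (h12' : a12 ∈ Set.Ioc 0 (π / 2)) (h13' : a13 ∈ Set.Ioc 0 (π / 2))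
    (h23' : a23 ∈ Set.Ioc 0 (π / 2))
    (β₁ β₂ β₃ : ℝ)
    (hβ₁ : β₁ = Real.arccos ((Real.cos a23 + Real.cos a24 * Real.cos a34) /
        (Real.sin a24 * Real.sin a34)))
    (hβ₂ : β₂ = Real.arccos ((Real.cos a13 + Real.cos a14 * Real.cos a34) /
        (Real.sin a14 * Real.sin a34)))
    (hβ₃ : β₃ = Real.arccos ((Real.cos a12 + Real.cos a14 * Real.cos a24) /
        (Real.sin a14 * Real.sin a24))) :
    (!![1, -Real.cos a12, -Real.cos a13, -Real.cos a14;
        -Real.cos a12, 1, -Real.cos a23, -Real.cos a24;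
        -Real.cos a13, -Real.cos a23, 1, -Real.cos a34;
        -Real.cos a14, -Real.cos a24, -Real.cos a34, 1] :
      Matrix (Fin 4) (Fin 4) ℝ).det =
    -4 * (1 - Real.cos a14 ^ 2) * (1 - Real.cos a24 ^ 2) * (1 - Real.cos a34 ^ 2) *
      Real.cos ((β₁ + β₂ + β₃) / 2) * Real.cos ((β₁ - β₂ + β₃) / 2) *
      Real.cos ((β₁ + β₂ - β₃) / 2) * Real.cos ((-β₁ + β₂ + β₃) / 2) :=
  det_gram_eq_face_angle_product_general a12 a13 a14 a23 a24 a34 h23 h13 h12 h14 h24 h34 β₁ β₂ β₃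
    hβ₁ hβ₂ hβ₃
end
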